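/- With P_j^i[k] as the weighted sum over partitions of length i, first part j, containing at least one part of each of the sizes j−1,...,j−k, the following recurrence holds for k = 0: P_j^i[0] = (a_j + b_1)·↑P_j^{i-1}[0] + ↑P_{j-1}^{i-1}[0] + (P_{j-1}^i[0] − (a_{j-1} + b_1)·↑P_{j-1}^{i-1}[0]), where ↑ denotes the shift b_u ← b_{u+1}. -/

import Mathlib

open Finset

attribute [local instance] Classical.propDecidable

noncomputable section

/-- Critical positions of a partition (as a function `Fin n → ℕ`): 0-indexed
positions `u ≥ 1` with `lam u = lam (u-1)`. -/
def crit {n : ℕ} (lam : Fin n → ℕ) : Finset (Fin n) :=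
  univ.filter fun u => 1 ≤ u.1 ∧
    lam u = lam ⟨u.1 - 1, Nat.lt_of_le_of_lt (Nat.sub_le u.1 1) u.2⟩

/-- The weight of a partition: the product over critical positions `u` of
`a (λ_u) + b_{u-1}` (paper's 1-indexed convention; here `u` is 0-indexed, so the
factor is `a (lam u) + b u`). -/
def wt {R : Type*} [CommRing R] (a b : ℕ → R) {n : ℕ} (lam : Fin n → ℕ) : R :=
  ∏ u ∈ crit lam, (a (lam u) + b u.1)

/-- The finset of partitions of length `i`, with first part `j`, positive parts, and
at least one part equal to `j - l` for each `l = 1, …, k`. -/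
def PartSet (j i k : ℕ) : Finset (Fin i → ℕ) :=
  (Fintype.piFinset fun _ : Fin i => Finset.Icc 1 j).filter fun lam =>
    (∀ u v : Fin i, u ≤ v → lam v ≤ lam u) ∧
    (∃ h : 0 < i, lam ⟨0, h⟩ = j) ∧
    (∀ l, 1 ≤ l → l ≤ k → ∃ u, lam u = j - l)

/-- `P_j^i[k]`: the weighted sum over `PartSet j i k`. -/
def P {R : Type*} [CommRing R] (a b : ℕ → R) (j i k : ℕ) : R :=
  ∑ lam ∈ PartSet j i k, wt a b lam

/-
Removing the first part `j` of a partition with second part `t` leaves a partition of length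
`i - 1` with first part `t`, whose critical positions are those of the original shifted down by
one, hence are weighted by `b_{u+1}`; position `1` itself is critical exactly when `t = j`.
Summing over `t` gives
`P_j^{m+2}[0] = (a_j + b_1) ↑P_j^{m+1}[0] + ∑_{t < j} ↑P_t^{m+1}[0]`,
and the recurrence is this identity for `j` minus the same identity for `j - 1`.
-/

section

variable {R : Type*} [CommRing R]

lemma mem_PartSet_zero {j m : ℕ} {lam : Fin (m + 1) → ℕ} :
    lam ∈ PartSet j (m + 1) 0 ↔ (∀ u, 1 ≤ lam u) ∧ Antitone lam ∧ lam 0 = j := by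
  simp only [PartSet, mem_filter, Fintype.mem_piFinset, mem_Icc]
  constructor
  · rintro ⟨hbd, hanti, ⟨_, h0⟩, -⟩
    exact ⟨fun u => (hbd u).1, fun u v huv => hanti u v huv, h0⟩
  · rintro ⟨hpos, hanti, rfl⟩
    exact ⟨fun u => ⟨hpos u, hanti (Fin.zero_le u)⟩, fun u v huv => hanti huv,
      ⟨m.succ_pos, rfl⟩, fun l hl hlk => by omega⟩

lemma wt_cons (a b : ℕ → R) {m : ℕ} (x : ℕ) (mu : Fin (m + 1) → ℕ) :
    wt a b (Fin.cons x mu : Fin (m + 2) → ℕ) =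
      (if mu 0 = x then a x + b 1 else 1) * wt a (fun u => b (u + 1)) mu := by
  simp +contextual [wt, crit, prod_filter, Fin.prod_univ_succ, ← Fin.succ_mk]

lemma sum_wt_filter_apply_one_eq (a b : ℕ → R) {j t : ℕ} (m : ℕ) (htj : t ≤ j) :
    ∑ lam ∈ PartSet j (m + 2) 0 with lam 1 = t, wt a b lam =
      (if t = j then a j + b 1 else 1) * P a (fun u => b (u + 1)) t (m + 1) 0 := by
  rw [P, mul_sum]
  refine (sum_nbij' (Fin.cons j) Fin.tail (fun mu hmu => ?_) (fun lam hlam => ?_)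
    (fun mu _ => Fin.tail_cons _ _) (fun lam hlam => ?_) (fun mu hmu => ?_)).symm
  · obtain ⟨hpos, hanti, rfl⟩ := mem_PartSet_zero.1 hmu
    refine mem_filter.2 ⟨(mem_PartSet_zero (m := m + 1)).2 ⟨?_, ?_, Fin.cons_zero _ _⟩,
      Fin.cons_one _ _⟩
    · exact Fin.forall_fin_succ.2 ⟨(hpos 0).trans htj, hpos⟩
    · exact antitone_vecCons.2 ⟨htj, hanti⟩
  · obtain ⟨hmem, rfl⟩ := mem_filter.1 hlam
    obtain ⟨hpos, hanti, -⟩ := (mem_PartSet_zero (m := m + 1)).1 hmem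
    exact mem_PartSet_zero.2
      ⟨fun u => hpos _, hanti.comp_monotone Fin.strictMono_succ.monotone, rfl⟩
  · obtain ⟨-, -, h0⟩ := (mem_PartSet_zero (m := m + 1)).1 (mem_filter.1 hlam).1
    rw [← h0, Fin.cons_self_tail]
  · obtain ⟨-, -, h0⟩ := mem_PartSet_zero.1 hmu
    rw [wt_cons, h0]

theorem P_add_two_zero (a b : ℕ → R) (j m : ℕ) :
    P a b j (m + 2) 0 = (a j + b 1) * P a (fun u => b (u + 1)) j (m + 1) 0 +
      ∑ t ∈ range j, P a (fun u => b (u + 1)) t (m + 1) 0 := by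
  have hmaps : ∀ lam ∈ PartSet j (m + 2) 0, lam 1 ∈ range (j + 1) := by
    intro lam hlam
    obtain ⟨-, hanti, h0⟩ := (mem_PartSet_zero (m := m + 1)).1 hlam
    exact mem_range_succ_iff.2 (h0 ▸ hanti (Fin.zero_le 1))
  rw [P, ← sum_fiberwise_of_maps_to hmaps, sum_range_succ, add_comm,
    sum_wt_filter_apply_one_eq a b m le_rfl, if_pos rfl]
  congr 1
  refine sum_congr rfl fun t ht => ?_
  rw [sum_wt_filter_apply_one_eq a b m (mem_range.1 ht).le, if_neg (mem_range.1 ht).ne, one_mul]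

end

/-- The recurrence for `P_j^i[0]`:
`P_j^i[0] = (a_j + b_1) ↑P_j^{i-1}[0] + ↑P_{j-1}^{i-1}[0]
  + (P_{j-1}^i[0] − (a_{j-1} + b_1) ↑P_{j-1}^{i-1}[0])`,
where `↑` is the substitution `b_u ← b_{u+1}`. -/
theorem statement4 {R : Type*} [CommRing R] (a b : ℕ → R) (j i : ℕ)
    (hj : 1 ≤ j) (hi : 2 ≤ i) :
    P a b j i 0 =
      (a j + b 1) * P a (fun u => b (u + 1)) j (i - 1) 0 +
        P a (fun u => b (u + 1)) (j - 1) (i - 1) 0 +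
        (P a b (j - 1) i 0 - (a (j - 1) + b 1) * P a (fun u => b (u + 1)) (j - 1) (i - 1) 0) := by
  obtain ⟨m, rfl⟩ : ∃ m, i = m + 2 := ⟨i - 2, by omega⟩
  obtain ⟨k, rfl⟩ : ∃ k, j = k + 1 := ⟨j - 1, by omega⟩
  rw [show m + 2 - 1 = m + 1 by omega, Nat.add_sub_cancel, P_add_two_zero, P_add_two_zero,
    sum_range_succ]
  ring

end
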